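/- arXiv:1311.4743 — 2 statements merged into one kernel-verified Lean document; each statement's English description precedes it below -/
import Mathlib

section
/- Let F be a probability density in v and φ ∈ 𝒮(ℝ^d). Define χ^ε(x,v) = ∫₀^∞ e^{−t} φ(x+εvt) dt. Then ‖χ^ε F‖_{L²_{F^{-1}}} ≤ ‖φ‖_{L²(ℝ^d)}, i.e. ∫∫ |χ^ε(x,v)|² F(v) dv dx ≤ ∫ |φ(x)|² dx. -/
/-!
By Cauchy–Schwarz for the probability measure `e^{-t} dt` on `(0, ∞)`,
`|χ^ε(x,v)|² ≤ ∫₀^∞ e^{-t} |φ(x + εvt)|² dt`. Integrating against `F(v) dv dx` and swapping the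
integrals (Tonelli), the `x`-integral of `|φ(x + εvt)|²` is `‖φ‖²` for every `v` and `t` by
translation invariance, and the remaining weights `e^{-t} dt` and `F(v) dv` both have mass one.
-/

open MeasureTheory Set
open scoped ENNReal

section Probability

variable {α : Type*} [MeasurableSpace α] {μ : Measure α}

theorem ofReal_integral_le_lintegral_ofReal {f : α → ℝ} (hf : ∀ a, 0 ≤ f a) :
    ENNReal.ofReal (∫ a, f a ∂μ) ≤ ∫⁻ a, ENNReal.ofReal (f a) ∂μ :=
  calc ENNReal.ofReal (∫ a, f a ∂μ) ≤ ‖∫ a, f a ∂μ‖ₑ := Real.ofReal_le_enorm _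
    _ ≤ ∫⁻ a, ‖f a‖ₑ ∂μ := enorm_integral_le_lintegral_enorm f
    _ = ∫⁻ a, ENNReal.ofReal (f a) ∂μ := by simp only [Real.enorm_eq_ofReal (hf _)]

theorem ofReal_sq_integral_le_lintegral [IsProbabilityMeasure μ] (g : α → ℝ) :
    ENNReal.ofReal ((∫ a, g a ∂μ) ^ 2) ≤ ∫⁻ a, ENNReal.ofReal (g a ^ 2) ∂μ := by
  by_cases hg : AEStronglyMeasurable g μ
  swap
  · simp [integral_undef fun h => hg h.aestronglyMeasurable]
  have ofReal_sq (x : ℝ) : ENNReal.ofReal (x ^ 2) = ‖x‖ₑ ^ 2 := by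
    rw [Real.enorm_eq_ofReal_abs, ← ENNReal.ofReal_pow (abs_nonneg x), sq_abs]
  calc ENNReal.ofReal ((∫ a, g a ∂μ) ^ 2) = ‖∫ a, g a ∂μ‖ₑ ^ 2 := ofReal_sq _
    _ ≤ eLpNorm g 1 μ ^ 2 := by
      rw [eLpNorm_one_eq_lintegral_enorm]
      gcongr
      exact enorm_integral_le_lintegral_enorm g
    _ ≤ eLpNorm g 2 μ ^ 2 := by
      gcongr
      exact eLpNorm_le_eLpNorm_of_exponent_le one_le_two hg
    _ = ∫⁻ a, ENNReal.ofReal (g a ^ 2) ∂μ := by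
      simp only [ofReal_sq]
      simpa using eLpNorm_nnreal_pow_eq_lintegral (f := g) (μ := μ) (p := 2) two_ne_zero

theorem isProbabilityMeasure_withDensity_ofReal {w : α → ℝ} (hw : Integrable w μ)
    (hw_nonneg : 0 ≤ᵐ[μ] w) (hw_one : ∫ a, w a ∂μ = 1) :
    IsProbabilityMeasure (μ.withDensity fun a => ENNReal.ofReal (w a)) :=
  ⟨by rw [withDensity_apply _ MeasurableSet.univ, Measure.restrict_univ,
    ← ofReal_integral_eq_lintegral_ofReal hw hw_nonneg, hw_one, ENNReal.ofReal_one]⟩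

theorem integral_withDensity_ofReal {w : α → ℝ} (hw : Measurable w) (hw_nonneg : ∀ a, 0 ≤ w a)
    (g : α → ℝ) :
    ∫ a, g a ∂μ.withDensity (fun a => ENNReal.ofReal (w a)) = ∫ a, w a * g a ∂μ := by
  rw [integral_withDensity_eq_integral_toReal_smul hw.ennreal_ofReal
    (ae_of_all _ fun _ => ENNReal.ofReal_lt_top)]
  simp only [ENNReal.toReal_ofReal (hw_nonneg _), smul_eq_mul]

end Probability

theorem lintegral_lintegral_lintegral_add_eq {G V T : Type*} [MeasurableSpace G] [AddGroup G]
    [MeasurableAdd₂ G] [MeasurableSpace V] [MeasurableSpace T] {μ : Measure G}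
    [μ.IsAddRightInvariant] [SFinite μ] (ν : Measure V) (ρ : Measure T) [SFinite ν] [SFinite ρ]
    {f : G → ℝ≥0∞} (hf : Measurable f) {τ : V → T → G} (hτ : Measurable (Function.uncurry τ)) :
    ∫⁻ x, ∫⁻ v, ∫⁻ t, f (x + τ v t) ∂ρ ∂ν ∂μ = ν univ * ρ univ * ∫⁻ x, f x ∂μ := by
  have hmeas : Measurable fun p : (G × V) × T => f (p.1.1 + τ p.1.2 p.2) :=
    hf.comp ((measurable_fst.comp measurable_fst).add
      (hτ.comp ((measurable_snd.comp measurable_fst).prodMk measurable_snd)))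
  calc ∫⁻ x, ∫⁻ v, ∫⁻ t, f (x + τ v t) ∂ρ ∂ν ∂μ
      = ∫⁻ v, ∫⁻ x, ∫⁻ t, f (x + τ v t) ∂ρ ∂μ ∂ν :=
        lintegral_lintegral_swap hmeas.lintegral_prod_right'.aemeasurable
    _ = ∫⁻ v, ∫⁻ t, ∫⁻ x, f (x + τ v t) ∂μ ∂ρ ∂ν := lintegral_congr fun v =>
        lintegral_lintegral_swap
          (hmeas.comp ((measurable_fst.prodMk measurable_const).prodMk measurable_snd)).aemeasurable
    _ = ν univ * ρ univ * ∫⁻ x, f x ∂μ := by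
        simp only [lintegral_add_right_eq_self, lintegral_const]
        ring

theorem stmt_5_general {d : ℕ} (ε : ℝ)
    (F : EuclideanSpace ℝ (Fin d) → ℝ)
    (hFnonneg : ∀ v, 0 ≤ F v) (hFint : ∫ v, F v = 1)
    (φ : SchwartzMap (EuclideanSpace ℝ (Fin d)) ℝ)
    (χ : EuclideanSpace ℝ (Fin d) → EuclideanSpace ℝ (Fin d) → ℝ)
    (hχ : ∀ x v, χ x v = ∫ t in Set.Ioi (0:ℝ), Real.exp (-t) * φ (x + (ε * t) • v)) :
    (∫ x, ∫ v, (χ x v) ^ 2 * F v) ≤ ∫ x, (φ x) ^ 2 := by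
  set ρ : Measure ℝ := (volume.restrict (Ioi 0)).withDensity fun t => ENNReal.ofReal (Real.exp (-t))
  set ν := volume.withDensity fun v => ENNReal.ofReal (F v)
  have : IsProbabilityMeasure ρ := isProbabilityMeasure_withDensity_ofReal
    (integrableOn_exp_neg_Ioi 0) (ae_of_all _ fun t => (Real.exp_pos _).le)
    integral_exp_neg_Ioi_zero
  have hFi : Integrable F := .of_integral_ne_zero (by simp [hFint])
  have : IsProbabilityMeasure ν :=
    isProbabilityMeasure_withDensity_ofReal hFi (ae_of_all _ hFnonneg) hFint
  have hχρ (x v) : χ x v = ∫ t, φ (x + (ε * t) • v) ∂ρ := by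
    rw [hχ, integral_withDensity_ofReal (by fun_prop) fun t => (Real.exp_pos _).le]
  have hχF (x) : ∫⁻ v, ENNReal.ofReal (χ x v ^ 2 * F v) = ∫⁻ v, ENNReal.ofReal (χ x v ^ 2) ∂ν := by
    rw [lintegral_withDensity_eq_lintegral_mul_non_measurable₀ _ hFi.aemeasurable.ennreal_ofReal
      (ae_of_all _ fun _ => ENNReal.ofReal_lt_top)]
    simp only [Pi.mul_apply, mul_comm (ENNReal.ofReal (F _)), ENNReal.ofReal_mul (sq_nonneg _)]
  rw [← ENNReal.ofReal_le_ofReal_iff (integral_nonneg fun x => sq_nonneg _),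
    ofReal_integral_eq_lintegral_ofReal (φ.memLp 2 volume).integrable_sq
      (ae_of_all _ fun x => sq_nonneg _)]
  calc ENNReal.ofReal (∫ x, ∫ v, χ x v ^ 2 * F v)
      ≤ ∫⁻ x, ∫⁻ v, ENNReal.ofReal (χ x v ^ 2 * F v) :=
        (ofReal_integral_le_lintegral_ofReal fun x => integral_nonneg fun v =>
          mul_nonneg (sq_nonneg _) (hFnonneg v)).trans <| lintegral_mono fun x =>
            ofReal_integral_le_lintegral_ofReal fun v => mul_nonneg (sq_nonneg _) (hFnonneg v)
    _ ≤ ∫⁻ x, ∫⁻ v, ∫⁻ t, ENNReal.ofReal (φ (x + (ε * t) • v) ^ 2) ∂ρ ∂ν := by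
        simp only [hχF]
        gcongr with x v
        rw [hχρ]
        exact ofReal_sq_integral_le_lintegral _
    _ = ∫⁻ x, ENNReal.ofReal (φ x ^ 2) := by
        rw [lintegral_lintegral_lintegral_add_eq ν ρ (f := fun y => ENNReal.ofReal (φ y ^ 2))
          (τ := fun v t => (ε * t) • v) (by fun_prop) (by fun_prop), measure_univ, measure_univ,
          one_mul, one_mul]

/-- For a probability density `F` in `v` and `φ ∈ 𝒮(ℝ^d)`, the function
`χ^ε(x,v) = ∫₀^∞ e^{−t} φ(x+εvt) dt` satisfies `‖χ^ε F‖_{L²_{F⁻¹}} ≤ ‖φ‖_{L²}`, i.e.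
`∫∫ |χ^ε|² F dv dx ≤ ∫ |φ|² dx`. -/
theorem stmt_5 {d : ℕ} (ε : ℝ) (hε : 0 < ε)
    (F : EuclideanSpace ℝ (Fin d) → ℝ) (hFmeas : Measurable F)
    (hFnonneg : ∀ v, 0 ≤ F v) (hFint : ∫ v, F v = 1)
    (φ : SchwartzMap (EuclideanSpace ℝ (Fin d)) ℝ)
    (χ : EuclideanSpace ℝ (Fin d) → EuclideanSpace ℝ (Fin d) → ℝ)
    (hχ : ∀ x v, χ x v = ∫ t in Set.Ioi (0:ℝ), Real.exp (-t) * φ (x + (ε * t) • v)) :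
    (∫ x, ∫ v, (χ x v) ^ 2 * F v) ≤ ∫ x, (φ x) ^ 2 :=
  stmt_5_general ε F hFnonneg hFint φ χ hχ
end

section
/- Let F be a probability density in v, φ ∈ 𝒮(ℝ^d), and χ^ε(x,v) = ∫₀^∞ e^{−t} φ(x+εvt) dt. For any λ > 0, choose C_λ > 0 with ∫_{|v|≥C_λ} F(v) dv < λ². Then ∫∫ |χ^ε − φ|²(x,v) F(v) dv dx ≤ 2ε² C_λ² · 2 ‖∇φ‖²_{L²} + 4 ‖φ‖²_{L²} λ². -/
open MeasureTheory
open Set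
open scoped ENNReal

lemma cs_helper {α : Type*} [MeasurableSpace α] (μ : Measure α) (w u : α → ℝ≥0∞)
    (hwm : AEMeasurable w μ) (hum : AEMeasurable u μ) :
    (∫⁻ a, w a * u a ∂μ) ^ 2 ≤ (∫⁻ a, w a ∂μ) * ∫⁻ a, w a * (u a) ^ 2 ∂μ := by
  have hpq : Real.HolderConjugate 2 2 := Real.HolderConjugate.two_two
  have hfm : AEMeasurable (fun a => (w a) ^ (1/2 : ℝ)) μ := hwm.pow_const _
  have hgm : AEMeasurable (fun a => (w a) ^ (1/2 : ℝ) * u a) μ := hfm.mul hum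
  have key := ENNReal.lintegral_mul_le_Lp_mul_Lq μ hpq hfm hgm
  have hhalf : ∀ x : ℝ≥0∞, (x ^ (1/2:ℝ)) ^ (2:ℝ) = x := by
    intro x
    rw [← ENNReal.rpow_mul]
    norm_num
  have e1 : (∫⁻ a, ((fun a => (w a) ^ (1/2:ℝ)) * fun a => (w a) ^ (1/2:ℝ) * u a) a ∂μ)
      = ∫⁻ a, w a * u a ∂μ := by
    refine lintegral_congr fun a => ?_
    show (w a) ^ (1/2:ℝ) * ((w a) ^ (1/2:ℝ) * u a) = _
    rw [← mul_assoc, ← ENNReal.rpow_add_of_nonneg _ _ (by norm_num) (by norm_num)]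
    norm_num
  have e2 : (∫⁻ a, ((w a) ^ (1/2:ℝ)) ^ (2:ℝ) ∂μ) = ∫⁻ a, w a ∂μ :=
    lintegral_congr fun a => hhalf _
  have e3 : (∫⁻ a, ((w a) ^ (1/2:ℝ) * u a) ^ (2:ℝ) ∂μ) = ∫⁻ a, w a * (u a) ^ 2 ∂μ := by
    refine lintegral_congr fun a => ?_
    rw [ENNReal.mul_rpow_of_nonneg _ _ (by norm_num), hhalf]
    congr 1
    rw [← ENNReal.rpow_natCast (u a) 2]
    norm_num
  rw [e1, e2, e3] at key
  calc (∫⁻ a, w a * u a ∂μ) ^ 2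
      ≤ ((∫⁻ a, w a ∂μ) ^ (1/2:ℝ) * (∫⁻ a, w a * (u a)^2 ∂μ) ^ (1/2:ℝ)) ^ 2 := by
        exact pow_le_pow_left' key 2
    _ = (∫⁻ a, w a ∂μ) * ∫⁻ a, w a * (u a) ^ 2 ∂μ := by
        rw [mul_pow, ← ENNReal.rpow_natCast ((∫⁻ a, w a ∂μ) ^ (1/2:ℝ)) 2,
          ← ENNReal.rpow_natCast ((∫⁻ a, w a * (u a)^2 ∂μ) ^ (1/2:ℝ)) 2]
        push_cast
        rw [hhalf, hhalf]

lemma expIntOn : IntegrableOn (fun t : ℝ => Real.exp (-t)) (Ioi 0) := by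
  simpa using exp_neg_integrableOn_Ioi 0 one_pos

lemma expMass : (∫⁻ t in Ioi (0:ℝ), ENNReal.ofReal (Real.exp (-t))) = 1 := by
  rw [← ofReal_integral_eq_lintegral_ofReal expIntOn
    (Filter.Eventually.of_forall fun t => (Real.exp_pos _).le), integral_exp_neg_Ioi_zero,
    ENNReal.ofReal_one]

lemma expMoment2 : (∫⁻ t in Ioi (0:ℝ), ENNReal.ofReal (Real.exp (-t)) * ENNReal.ofReal (t ^ 2))
    = ENNReal.ofReal 2 := by
  have hint : IntegrableOn (fun t : ℝ => Real.exp (-t) * t ^ 2) (Ioi 0) := by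
    have := Real.GammaIntegral_convergent (s := 3) (by norm_num)
    refine this.congr_fun (fun t ht => ?_) measurableSet_Ioi
    norm_num
  have hval : (∫ t in Ioi (0:ℝ), Real.exp (-t) * t ^ 2) = 2 := by
    have h3 := Real.Gamma_eq_integral (s := 3) (by norm_num)
    have h2 : Real.Gamma 3 = 2 := by
      rw [show (3:ℝ) = (2:ℕ)+1 by norm_num, Real.Gamma_nat_eq_factorial]
      norm_num
    rw [h3] at h2
    rw [← h2]
    refine setIntegral_congr_fun measurableSet_Ioi fun t ht => ?_
    norm_num
  calc (∫⁻ t in Ioi (0:ℝ), ENNReal.ofReal (Real.exp (-t)) * ENNReal.ofReal (t ^ 2))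
      = ∫⁻ t in Ioi (0:ℝ), ENNReal.ofReal (Real.exp (-t) * t ^ 2) := by
        refine lintegral_congr fun t => ?_
        rw [ENNReal.ofReal_mul (Real.exp_pos _).le]
    _ = ENNReal.ofReal 2 := by
        rw [← ofReal_integral_eq_lintegral_ofReal hint (Filter.Eventually.of_forall fun t =>
          mul_nonneg (Real.exp_pos _).le (sq_nonneg _)), hval]

lemma exp_weight_cs (g : ℝ → ℝ) (hg : Continuous g) (C : ℝ) (hb : ∀ t, |g t| ≤ C) :
    ENNReal.ofReal ((∫ t in Ioi (0:ℝ), Real.exp (-t) * g t) ^ 2)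
      ≤ ∫⁻ t in Ioi (0:ℝ), ENNReal.ofReal (Real.exp (-t)) * ENNReal.ofReal (g t ^ 2) := by
  have hmono : ∀ (g' : ℝ → ℝ), Continuous g' → (∀ t, |g' t| ≤ C) →
      IntegrableOn (fun t => Real.exp (-t) * g' t) (Ioi 0) := by
    intro g' hg' hb'
    refine Integrable.mono' (expIntOn.const_mul C) ?_ ?_
    · exact ((Real.continuous_exp.comp continuous_neg).mul hg').aestronglyMeasurable
    · refine Filter.Eventually.of_forall fun t => ?_
      rw [Real.norm_eq_abs, abs_mul, abs_of_pos (Real.exp_pos _), mul_comm]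
      exact mul_le_mul_of_nonneg_right (hb' t) (Real.exp_pos _).le
  have hgint := hmono g hg hb
  have hgaint := hmono (fun t => |g t|) hg.abs (fun t => by simpa using hb t)
  set I := ∫ t in Ioi (0:ℝ), Real.exp (-t) * g t with hI
  have habs : |I| ≤ ∫ t in Ioi (0:ℝ), Real.exp (-t) * |g t| := by
    simpa [Real.norm_eq_abs] using norm_integral_le_integral_norm
      (μ := volume.restrict (Ioi 0)) (fun t => Real.exp (-t) * g t)
  have hw : AEMeasurable (fun t => ENNReal.ofReal (Real.exp (-t)))
      (volume.restrict (Ioi (0:ℝ))) :=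
    ((Real.continuous_exp.comp continuous_neg).measurable.ennreal_ofReal).aemeasurable
  have hu : AEMeasurable (fun t => ENNReal.ofReal |g t|) (volume.restrict (Ioi (0:ℝ))) :=
    (hg.abs.measurable.ennreal_ofReal).aemeasurable
  calc ENNReal.ofReal (I ^ 2) = ENNReal.ofReal |I| ^ 2 := by
        rw [← ENNReal.ofReal_pow (abs_nonneg _), sq_abs]
    _ ≤ ENNReal.ofReal (∫ t in Ioi (0:ℝ), Real.exp (-t) * |g t|) ^ 2 :=
        pow_le_pow_left' (ENNReal.ofReal_le_ofReal habs) 2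
    _ = (∫⁻ t in Ioi (0:ℝ), ENNReal.ofReal (Real.exp (-t)) * ENNReal.ofReal |g t|) ^ 2 := by
        rw [ofReal_integral_eq_lintegral_ofReal hgaint (Filter.Eventually.of_forall fun t =>
          mul_nonneg (Real.exp_pos _).le (abs_nonneg _))]
        congr 1
        exact lintegral_congr fun t => ENNReal.ofReal_mul (Real.exp_pos _).le
    _ ≤ (∫⁻ t in Ioi (0:ℝ), ENNReal.ofReal (Real.exp (-t)))
        * ∫⁻ t in Ioi (0:ℝ), ENNReal.ofReal (Real.exp (-t)) * (ENNReal.ofReal |g t|) ^ 2 :=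
        cs_helper _ _ _ hw hu
    _ = _ := by
        rw [expMass, one_mul]
        refine lintegral_congr fun t => ?_
        rw [← ENNReal.ofReal_pow (abs_nonneg _), sq_abs]

lemma schwartz_bdd {d : ℕ} {V : Type*} [NormedAddCommGroup V] [NormedSpace ℝ V]
    (f : SchwartzMap (EuclideanSpace ℝ (Fin d)) V) : ∃ C : ℝ, ∀ x, ‖f x‖ ≤ C := by
  obtain ⟨C, hC⟩ := f.decay' 0 0
  exact ⟨C, fun x => by have h := hC x; rw [pow_zero, one_mul, norm_iteratedFDeriv_zero] at h; exact h⟩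

lemma schwartz_sq_integrable {d : ℕ} {V : Type*} [NormedAddCommGroup V] [NormedSpace ℝ V]
    (f : SchwartzMap (EuclideanSpace ℝ (Fin d)) V) :
    Integrable (fun x => ‖f x‖ ^ 2) := by
  obtain ⟨C, hC⟩ := schwartz_bdd f
  refine (f.integrable.norm.const_mul C).mono'
    ((f.continuous.norm.pow 2).aestronglyMeasurable) ?_
  refine Filter.Eventually.of_forall fun x => ?_
  rw [Real.norm_eq_abs, abs_of_nonneg (by positivity), sq]
  exact mul_le_mul_of_nonneg_right (hC x) (norm_nonneg _)

lemma schwartz_sq_lintegral {d : ℕ} {V : Type*} [NormedAddCommGroup V] [NormedSpace ℝ V]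
    (f : SchwartzMap (EuclideanSpace ℝ (Fin d)) V) :
    (∫⁻ x, ENNReal.ofReal (‖f x‖ ^ 2)) = ENNReal.ofReal (∫ x, ‖f x‖ ^ 2) :=
  (ofReal_integral_eq_lintegral_ofReal (schwartz_sq_integrable f)
    (Filter.Eventually.of_forall fun x => sq_nonneg _)).symm

lemma translation_bound {d : ℕ} (φ : SchwartzMap (EuclideanSpace ℝ (Fin d)) ℝ)
    (h : EuclideanSpace ℝ (Fin d)) :
    (∫⁻ x, ENNReal.ofReal ((φ (x + h) - φ x) ^ 2))
      ≤ ENNReal.ofReal (‖h‖ ^ 2) *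
        ENNReal.ofReal (∫ x, ‖fderiv ℝ (fun y => φ y) x‖ ^ 2) := by
  set Dφ : SchwartzMap (EuclideanSpace ℝ (Fin d)) (EuclideanSpace ℝ (Fin d) →L[ℝ] ℝ) :=
    SchwartzMap.fderivCLM ℝ (EuclideanSpace ℝ (Fin d)) ℝ φ with hDφ
  have hD : ∀ y, Dφ y = fderiv ℝ (fun y => φ y) y := fun y => SchwartzMap.fderivCLM_apply ℝ φ y
  -- FTC
  have ftc : ∀ x, φ (x + h) - φ x = ∫ s in Ioc (0:ℝ) 1, (Dφ (x + s • h)) h := by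
    intro x
    have hcont : Continuous fun s : ℝ => (Dφ (x + s • h)) h :=
      Continuous.clm_apply (Dφ.continuous.comp (continuous_const.add (continuous_id.smul continuous_const))) continuous_const
    have hderiv : ∀ s ∈ uIcc (0:ℝ) 1, HasDerivAt (fun s : ℝ => φ (x + s • h))
        ((Dφ (x + s • h)) h) s := by
      intro s _
      have hc : HasDerivAt (fun s : ℝ => x + s • h) h s := by
        simpa using ((hasDerivAt_id s).smul_const h).const_add x
      have hf : HasFDerivAt (fun y => φ y) (fderiv ℝ (fun y => φ y) (x + s • h)) (x + s • h) :=
        (φ.differentiable.differentiableAt).hasFDerivAt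
      rw [hD]
      exact hf.comp_hasDerivAt s hc
    have := intervalIntegral.integral_eq_sub_of_hasDerivAt hderiv
      (hcont.intervalIntegrable 0 1)
    rw [intervalIntegral.integral_of_le zero_le_one] at this
    simp only [one_smul, zero_smul, add_zero] at this
    rw [this]
  -- pointwise bound
  have ptwise : ∀ x, ENNReal.ofReal ((φ (x + h) - φ x) ^ 2)
      ≤ ∫⁻ s in Ioc (0:ℝ) 1, ENNReal.ofReal (‖h‖ ^ 2 * ‖Dφ (x + s • h)‖ ^ 2) := by
    intro x
    have hcont : Continuous fun s : ℝ => (Dφ (x + s • h)) h :=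
      Continuous.clm_apply (Dφ.continuous.comp (continuous_const.add (continuous_id.smul continuous_const))) continuous_const
    set I := ∫ s in Ioc (0:ℝ) 1, (Dφ (x + s • h)) h with hI
    have habs : |I| ≤ ∫ s in Ioc (0:ℝ) 1, |(Dφ (x + s • h)) h| := by
      simpa [Real.norm_eq_abs] using norm_integral_le_integral_norm
        (μ := volume.restrict (Ioc 0 1)) (fun s => (Dφ (x + s • h)) h)
    have hu : AEMeasurable (fun s => ENNReal.ofReal |(Dφ (x + s • h)) h|)
        (volume.restrict (Ioc (0:ℝ) 1)) :=
      (hcont.abs.measurable.ennreal_ofReal).aemeasurable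
    have cs := cs_helper (volume.restrict (Ioc (0:ℝ) 1)) (fun _ => 1)
      (fun s => ENNReal.ofReal |(Dφ (x + s • h)) h|) aemeasurable_const hu
    simp only [one_mul, lintegral_one, Measure.restrict_apply_univ, Real.volume_Ioc,
      sub_zero, ENNReal.ofReal_one] at cs
    calc ENNReal.ofReal ((φ (x + h) - φ x) ^ 2)
        = ENNReal.ofReal |I| ^ 2 := by
          rw [← ENNReal.ofReal_pow (abs_nonneg _), sq_abs, ftc x]
      _ ≤ ENNReal.ofReal (∫ s in Ioc (0:ℝ) 1, |(Dφ (x + s • h)) h|) ^ 2 :=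
          pow_le_pow_left' (ENNReal.ofReal_le_ofReal habs) 2
      _ = (∫⁻ s in Ioc (0:ℝ) 1, ENNReal.ofReal |(Dφ (x + s • h)) h|) ^ 2 := by
          rw [ofReal_integral_eq_lintegral_ofReal (hcont.abs.integrableOn_Ioc)
            (Filter.Eventually.of_forall fun s => abs_nonneg _)]
      _ ≤ ∫⁻ s in Ioc (0:ℝ) 1, ENNReal.ofReal |(Dφ (x + s • h)) h| ^ 2 := by
          simpa using cs
      _ ≤ _ := by
          refine lintegral_mono fun s => ?_
          rw [← ENNReal.ofReal_pow (abs_nonneg _), sq_abs]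
          refine ENNReal.ofReal_le_ofReal ?_
          calc ((Dφ (x + s • h)) h) ^ 2 = |(Dφ (x + s • h)) h| ^ 2 := (sq_abs _).symm
            _ ≤ (‖Dφ (x + s • h)‖ * ‖h‖) ^ 2 := by
                refine pow_le_pow_left₀ (abs_nonneg _) ?_ 2
                simpa [Real.norm_eq_abs] using (Dφ (x + s • h)).le_opNorm h
            _ = ‖h‖ ^ 2 * ‖Dφ (x + s • h)‖ ^ 2 := by ring
  -- integrate in x and swap
  have hmeas : AEMeasurable (Function.uncurry fun (x : EuclideanSpace ℝ (Fin d)) (s : ℝ) =>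
      ENNReal.ofReal (‖h‖ ^ 2 * ‖Dφ (x + s • h)‖ ^ 2))
      ((volume : Measure (EuclideanSpace ℝ (Fin d))).prod (volume.restrict (Ioc (0:ℝ) 1))) := by
    have hc : Continuous fun p : (EuclideanSpace ℝ (Fin d)) × ℝ =>
        ENNReal.ofReal (‖h‖ ^ 2 * ‖Dφ (p.1 + p.2 • h)‖ ^ 2) :=
      ENNReal.continuous_ofReal.comp (continuous_const.mul
        ((Dφ.continuous.comp (continuous_fst.add
          (continuous_snd.smul continuous_const))).norm.pow 2))
    exact (hc.measurable).aemeasurable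
  calc (∫⁻ x, ENNReal.ofReal ((φ (x + h) - φ x) ^ 2))
      ≤ ∫⁻ x, ∫⁻ s in Ioc (0:ℝ) 1, ENNReal.ofReal (‖h‖ ^ 2 * ‖Dφ (x + s • h)‖ ^ 2) :=
        lintegral_mono ptwise
    _ = ∫⁻ s in Ioc (0:ℝ) 1, ∫⁻ x, ENNReal.ofReal (‖h‖ ^ 2 * ‖Dφ (x + s • h)‖ ^ 2) :=
        lintegral_lintegral_swap hmeas
    _ = ∫⁻ s in Ioc (0:ℝ) 1, ENNReal.ofReal (‖h‖ ^ 2) *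
          ENNReal.ofReal (∫ x, ‖fderiv ℝ (fun y => φ y) x‖ ^ 2) := by
        refine lintegral_congr fun s => ?_
        have htr : (∫⁻ x, ENNReal.ofReal (‖h‖ ^ 2 * ‖Dφ (x + s • h)‖ ^ 2))
            = ∫⁻ x, ENNReal.ofReal (‖h‖ ^ 2 * ‖Dφ x‖ ^ 2) :=
          lintegral_add_right_eq_self (fun x => ENNReal.ofReal (‖h‖ ^ 2 * ‖Dφ x‖ ^ 2)) (s • h)
        rw [htr]
        have : ∀ x : EuclideanSpace ℝ (Fin d), ENNReal.ofReal (‖h‖ ^ 2 * ‖Dφ x‖ ^ 2)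
            = ENNReal.ofReal (‖h‖ ^ 2) * ENNReal.ofReal (‖Dφ x‖ ^ 2) := fun x =>
          ENNReal.ofReal_mul (sq_nonneg _)
        rw [lintegral_congr this,
          lintegral_const_mul' _ _ ENNReal.ofReal_ne_top, schwartz_sq_lintegral Dφ]
        congr 2
    _ = _ := by
        rw [setLIntegral_const, Real.volume_Ioc]
        norm_num

/-- For a probability density `F`, `φ ∈ 𝒮(ℝ^d)`, `χ^ε(x,v)=∫₀^∞ e^{−t}φ(x+εvt)dt` and
`C_λ` with `∫_{|v|≥C_λ} F < λ²`, one has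
`∫∫ |χ^ε−φ|² F ≤ 4 ε² C_λ² ‖∇φ‖²_{L²} + 4 λ² ‖φ‖²_{L²}`. -/
theorem stmt_6 {d : ℕ} (ε lam Cl : ℝ) (hε : 0 < ε) (hlam : 0 < lam) (hCl : 0 < Cl)
    (F : EuclideanSpace ℝ (Fin d) → ℝ) (hFmeas : Measurable F)
    (hFnonneg : ∀ v, 0 ≤ F v) (hFint : ∫ v, F v = 1)
    (hCtail : ∫ v in {v : EuclideanSpace ℝ (Fin d) | Cl ≤ ‖v‖}, F v < lam ^ 2)
    (φ : SchwartzMap (EuclideanSpace ℝ (Fin d)) ℝ)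
    (χ : EuclideanSpace ℝ (Fin d) → EuclideanSpace ℝ (Fin d) → ℝ)
    (hχ : ∀ x v, χ x v = ∫ t in Set.Ioi (0:ℝ), Real.exp (-t) * φ (x + (ε * t) • v)) :
    (∫ x, ∫ v, (χ x v - φ x) ^ 2 * F v) ≤
      2 * ε ^ 2 * Cl ^ 2 * (2 * ∫ x, ‖fderiv ℝ (fun y => φ y) x‖ ^ 2) +
        4 * (∫ x, (φ x) ^ 2) * lam ^ 2 := by
  set K : ℝ := ∫ x, ‖fderiv ℝ (fun y => φ y) x‖ ^ 2 with hKdef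
  set P : ℝ := ∫ x, (φ x) ^ 2 with hPdef
  have hK0 : 0 ≤ K := integral_nonneg fun x => sq_nonneg _
  have hP0 : 0 ≤ P := integral_nonneg fun x => sq_nonneg _
  obtain ⟨Cb, hCb⟩ := schwartz_bdd φ
  have hCb' : ∀ y : EuclideanSpace ℝ (Fin d), |φ y| ≤ Cb := fun y => by simpa [Real.norm_eq_abs] using hCb y
  -- basic P lintegral
  have hPlint : (∫⁻ x, ENNReal.ofReal ((φ x) ^ 2)) = ENNReal.ofReal P := by
    rw [hPdef]
    rw [show (∫ x, (φ x)^2) = ∫ x, ‖φ x‖^2 from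
      integral_congr_ae (Filter.Eventually.of_forall fun x => by
        simp [Real.norm_eq_abs, sq_abs]), ← schwartz_sq_lintegral φ]
    exact lintegral_congr fun x => by simp [Real.norm_eq_abs, sq_abs]
  -- joint measurability of χ
  have hχmeas : Measurable fun p : EuclideanSpace ℝ (Fin d) × EuclideanSpace ℝ (Fin d) => χ p.1 p.2 := by
    have hfc : Continuous fun q : (EuclideanSpace ℝ (Fin d) × EuclideanSpace ℝ (Fin d)) × ℝ =>
        Real.exp (-q.2) * φ (q.1.1 + (ε * q.2) • q.1.2) := by
      refine ((Real.continuous_exp.comp continuous_snd.neg).mul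
        (φ.continuous.comp ?_))
      exact (continuous_fst.fst.add (((continuous_const.mul continuous_snd).smul
        continuous_fst.snd)))
    have hsm : StronglyMeasurable fun p : EuclideanSpace ℝ (Fin d) × EuclideanSpace ℝ (Fin d) =>
        ∫ t in Ioi (0:ℝ), Real.exp (-t) * φ (p.1 + (ε * t) • p.2) :=
      (hfc.stronglyMeasurable).integral_prod_right'
        (ν := volume.restrict (Ioi (0:ℝ)))
    have heq : (fun p : EuclideanSpace ℝ (Fin d) × EuclideanSpace ℝ (Fin d) => χ p.1 p.2) = fun p : EuclideanSpace ℝ (Fin d) × EuclideanSpace ℝ (Fin d) =>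
        ∫ t in Ioi (0:ℝ), Real.exp (-t) * φ (p.1 + (ε * t) • p.2) :=
      funext fun p => hχ p.1 p.2
    rw [heq]; exact hsm.measurable
  have m1 : Measurable fun p : EuclideanSpace ℝ (Fin d) × EuclideanSpace ℝ (Fin d) => (χ p.1 p.2 - φ p.1) ^ 2 * F p.2 :=
    (((hχmeas.sub (φ.continuous.measurable.comp measurable_fst)).pow_const 2).mul
      (hFmeas.comp measurable_snd))
  -- pointwise representation of χ - φ
  have hgint : ∀ (x v : EuclideanSpace ℝ (Fin d)), IntegrableOn
      (fun t => Real.exp (-t) * φ (x + (ε * t) • v)) (Ioi 0) := by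
    intro x v
    refine Integrable.mono' (expIntOn.const_mul Cb) ?_ ?_
    · refine (((Real.continuous_exp.comp continuous_neg).mul (φ.continuous.comp
        (continuous_const.add ((continuous_const.mul continuous_id).smul
          continuous_const)))).aestronglyMeasurable)
    · refine Filter.Eventually.of_forall fun t => ?_
      rw [Real.norm_eq_abs, abs_mul, abs_of_pos (Real.exp_pos _), mul_comm]
      exact mul_le_mul_of_nonneg_right (hCb' _) (Real.exp_pos _).le
  have hrep : ∀ x v : EuclideanSpace ℝ (Fin d), χ x v - φ x
      = ∫ t in Ioi (0:ℝ), Real.exp (-t) * (φ (x + (ε * t) • v) - φ x) := by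
    intro x v
    have hconst : (∫ t in Ioi (0:ℝ), Real.exp (-t) * φ x) = φ x := by
      rw [integral_mul_const, integral_exp_neg_Ioi_zero, one_mul]
    have key : (∫ t in Ioi (0:ℝ), Real.exp (-t) * (φ (x + (ε * t) • v) - φ x))
        = (∫ t in Ioi (0:ℝ), Real.exp (-t) * φ (x + (ε * t) • v)) - φ x := by
      rw [show (fun t => Real.exp (-t) * (φ (x + (ε * t) • v) - φ x))
          = fun t => Real.exp (-t) * φ (x + (ε * t) • v) - Real.exp (-t) * φ x from
        funext fun t => by ring]
      rw [integral_sub (hgint x v) (expIntOn.mul_const (φ x)), hconst]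
    rw [hχ x v]
    exact key.symm
  -- Claim B : gradient bound for small v
  have hJB : ∀ v : EuclideanSpace ℝ (Fin d),
      (∫⁻ x, ENNReal.ofReal ((χ x v - φ x) ^ 2))
        ≤ ENNReal.ofReal (2 * ε ^ 2 * ‖v‖ ^ 2 * K) := by
    intro v
    have hpt : ∀ x : EuclideanSpace ℝ (Fin d), ENNReal.ofReal ((χ x v - φ x) ^ 2)
        ≤ ∫⁻ t in Ioi (0:ℝ), ENNReal.ofReal (Real.exp (-t)) *
            ENNReal.ofReal ((φ (x + (ε * t) • v) - φ x) ^ 2) := by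
      intro x
      have hg : Continuous fun t : ℝ => φ (x + (ε * t) • v) - φ x :=
        (φ.continuous.comp (continuous_const.add ((continuous_const.mul
          continuous_id).smul continuous_const))).sub continuous_const
      have hb : ∀ t : ℝ, |φ (x + (ε * t) • v) - φ x| ≤ Cb + Cb := fun t =>
        (abs_sub _ _).trans (add_le_add (hCb' _) (hCb' _))
      have := exp_weight_cs _ hg (Cb + Cb) hb
      rw [hrep x v]
      exact this
    have hswapm : AEMeasurable (Function.uncurry fun (x : EuclideanSpace ℝ (Fin d)) (t : ℝ) =>
        ENNReal.ofReal (Real.exp (-t)) * ENNReal.ofReal ((φ (x + (ε * t) • v) - φ x) ^ 2))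
        ((volume : Measure (EuclideanSpace ℝ (Fin d))).prod (volume.restrict (Ioi (0:ℝ)))) := by
      have hc : Measurable fun p : EuclideanSpace ℝ (Fin d) × ℝ =>
          ENNReal.ofReal (Real.exp (-p.2)) *
            ENNReal.ofReal ((φ (p.1 + (ε * p.2) • v) - φ p.1) ^ 2) := by
        refine Measurable.mul
          ((Real.continuous_exp.comp continuous_snd.neg).measurable.ennreal_ofReal) ?_
        exact (((φ.continuous.comp (continuous_fst.add ((continuous_const.mul
          continuous_snd).smul continuous_const))).sub
          (φ.continuous.comp continuous_fst)).pow 2).measurable.ennreal_ofReal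
      exact hc.aemeasurable
    calc (∫⁻ x, ENNReal.ofReal ((χ x v - φ x) ^ 2))
        ≤ ∫⁻ x, ∫⁻ t in Ioi (0:ℝ), ENNReal.ofReal (Real.exp (-t)) *
            ENNReal.ofReal ((φ (x + (ε * t) • v) - φ x) ^ 2) := lintegral_mono hpt
      _ = ∫⁻ t in Ioi (0:ℝ), ∫⁻ x, ENNReal.ofReal (Real.exp (-t)) *
            ENNReal.ofReal ((φ (x + (ε * t) • v) - φ x) ^ 2) := lintegral_lintegral_swap hswapm
      _ ≤ ∫⁻ t in Ioi (0:ℝ), (ENNReal.ofReal (Real.exp (-t)) * ENNReal.ofReal (t ^ 2)) *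
            ENNReal.ofReal (ε ^ 2 * ‖v‖ ^ 2 * K) := by
          refine lintegral_mono fun t => ?_
          rw [lintegral_const_mul' _ _ ENNReal.ofReal_ne_top]
          have htr := translation_bound φ ((ε * t) • v)
          have hnorm : ‖(ε * t) • v‖ ^ 2 = t ^ 2 * (ε ^ 2 * ‖v‖ ^ 2) := by
            rw [norm_smul, Real.norm_eq_abs, mul_pow, sq_abs]; ring
          calc ENNReal.ofReal (Real.exp (-t)) *
                ∫⁻ x, ENNReal.ofReal ((φ (x + (ε * t) • v) - φ x) ^ 2)
              ≤ ENNReal.ofReal (Real.exp (-t)) *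
                (ENNReal.ofReal (‖(ε * t) • v‖ ^ 2) * ENNReal.ofReal K) :=
                mul_le_mul_right htr _
            _ = (ENNReal.ofReal (Real.exp (-t)) * ENNReal.ofReal (t ^ 2)) *
                ENNReal.ofReal (ε ^ 2 * ‖v‖ ^ 2 * K) := by
                have hkey : ENNReal.ofReal (‖(ε * t) • v‖ ^ 2) * ENNReal.ofReal K
                    = ENNReal.ofReal (t ^ 2) * ENNReal.ofReal (ε ^ 2 * ‖v‖ ^ 2 * K) := by
                  rw [← ENNReal.ofReal_mul (by positivity),
                    ← ENNReal.ofReal_mul (sq_nonneg t)]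
                  congr 1
                  rw [hnorm]; ring
                rw [hkey]; ring
      _ = ENNReal.ofReal (2 * ε ^ 2 * ‖v‖ ^ 2 * K) := by
          rw [lintegral_mul_const' _ _ ENNReal.ofReal_ne_top, expMoment2,
            ← ENNReal.ofReal_mul (by norm_num)]
          congr 1
          ring
  -- bound on ∫⁻ χ² for Claim A
  have hchi_sq : ∀ v : EuclideanSpace ℝ (Fin d),
      (∫⁻ x, ENNReal.ofReal ((χ x v) ^ 2)) ≤ ENNReal.ofReal P := by
    intro v
    have hpt : ∀ x : EuclideanSpace ℝ (Fin d), ENNReal.ofReal ((χ x v) ^ 2)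
        ≤ ∫⁻ t in Ioi (0:ℝ), ENNReal.ofReal (Real.exp (-t)) *
            ENNReal.ofReal ((φ (x + (ε * t) • v)) ^ 2) := by
      intro x
      have hg : Continuous fun t : ℝ => φ (x + (ε * t) • v) :=
        φ.continuous.comp (continuous_const.add ((continuous_const.mul
          continuous_id).smul continuous_const))
      have := exp_weight_cs _ hg Cb (fun t => hCb' _)
      rw [hχ x v]
      exact this
    have hswapm : AEMeasurable (Function.uncurry fun (x : EuclideanSpace ℝ (Fin d)) (t : ℝ) =>
        ENNReal.ofReal (Real.exp (-t)) * ENNReal.ofReal ((φ (x + (ε * t) • v)) ^ 2))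
        ((volume : Measure (EuclideanSpace ℝ (Fin d))).prod (volume.restrict (Ioi (0:ℝ)))) := by
      have hc : Measurable fun p : EuclideanSpace ℝ (Fin d) × ℝ =>
          ENNReal.ofReal (Real.exp (-p.2)) * ENNReal.ofReal ((φ (p.1 + (ε * p.2) • v)) ^ 2) := by
        refine Measurable.mul
          ((Real.continuous_exp.comp continuous_snd.neg).measurable.ennreal_ofReal) ?_
        exact ((φ.continuous.comp (continuous_fst.add ((continuous_const.mul
          continuous_snd).smul continuous_const))).pow 2).measurable.ennreal_ofReal
      exact hc.aemeasurable
    calc (∫⁻ x, ENNReal.ofReal ((χ x v) ^ 2))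
        ≤ ∫⁻ x, ∫⁻ t in Ioi (0:ℝ), ENNReal.ofReal (Real.exp (-t)) *
            ENNReal.ofReal ((φ (x + (ε * t) • v)) ^ 2) := lintegral_mono hpt
      _ = ∫⁻ t in Ioi (0:ℝ), ∫⁻ x, ENNReal.ofReal (Real.exp (-t)) *
            ENNReal.ofReal ((φ (x + (ε * t) • v)) ^ 2) := lintegral_lintegral_swap hswapm
      _ = ∫⁻ t in Ioi (0:ℝ), ENNReal.ofReal (Real.exp (-t)) * ENNReal.ofReal P := by
          refine lintegral_congr fun t => ?_
          rw [lintegral_const_mul' _ _ ENNReal.ofReal_ne_top]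
          congr 1
          rw [← hPlint]
          exact lintegral_add_right_eq_self
            (fun x => ENNReal.ofReal ((φ x) ^ 2)) ((ε * t) • v)
      _ = ENNReal.ofReal P := by
          rw [lintegral_mul_const' _ _ ENNReal.ofReal_ne_top, expMass, one_mul]
  -- Claim A : crude bound for large v
  have hJA : ∀ v : EuclideanSpace ℝ (Fin d),
      (∫⁻ x, ENNReal.ofReal ((χ x v - φ x) ^ 2)) ≤ ENNReal.ofReal (4 * P) := by
    intro v
    have hm : Measurable fun x : EuclideanSpace ℝ (Fin d) => χ x v :=
      hχmeas.comp (measurable_id.prodMk measurable_const)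
    have hpt : ∀ x : EuclideanSpace ℝ (Fin d), ENNReal.ofReal ((χ x v - φ x) ^ 2)
        ≤ 2 * ENNReal.ofReal ((χ x v) ^ 2) + 2 * ENNReal.ofReal ((φ x) ^ 2) := by
      intro x
      have h1 : (χ x v - φ x) ^ 2 ≤ 2 * (χ x v) ^ 2 + 2 * (φ x) ^ 2 := by
        nlinarith [sq_nonneg (χ x v + φ x)]
      calc ENNReal.ofReal ((χ x v - φ x) ^ 2)
          ≤ ENNReal.ofReal (2 * (χ x v) ^ 2 + 2 * (φ x) ^ 2) := ENNReal.ofReal_le_ofReal h1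
        _ = 2 * ENNReal.ofReal ((χ x v) ^ 2) + 2 * ENNReal.ofReal ((φ x) ^ 2) := by
            rw [ENNReal.ofReal_add (by positivity) (by positivity),
              ENNReal.ofReal_mul (by norm_num), ENNReal.ofReal_mul (by norm_num)]
            norm_num
    calc (∫⁻ x, ENNReal.ofReal ((χ x v - φ x) ^ 2))
        ≤ ∫⁻ x, (2 * ENNReal.ofReal ((χ x v) ^ 2) + 2 * ENNReal.ofReal ((φ x) ^ 2)) :=
          lintegral_mono hpt
      _ = 2 * (∫⁻ x, ENNReal.ofReal ((χ x v) ^ 2)) + 2 * ∫⁻ x, ENNReal.ofReal ((φ x) ^ 2) := by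
          rw [lintegral_add_left (((hm.pow_const 2).ennreal_ofReal).const_mul 2),
            lintegral_const_mul' _ _ (by norm_num), lintegral_const_mul' _ _ (by norm_num)]
      _ ≤ 2 * ENNReal.ofReal P + 2 * ENNReal.ofReal P := by
          rw [hPlint]
          exact add_le_add (mul_le_mul_right (hchi_sq v) 2) le_rfl
      _ = ENNReal.ofReal (4 * P) := by
          rw [ENNReal.ofReal_mul (by norm_num)]
          norm_num
          ring
  -- F is integrable
  have hFi : Integrable F := by
    by_contra hni
    rw [integral_undef hni] at hFint
    exact one_ne_zero hFint.symm
  have hFlint : (∫⁻ v, ENNReal.ofReal (F v)) = 1 := by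
    rw [← ofReal_integral_eq_lintegral_ofReal hFi
      (Filter.Eventually.of_forall hFnonneg), hFint, ENNReal.ofReal_one]
  set S : Set (EuclideanSpace ℝ (Fin d)) := {v | Cl ≤ ‖v‖} with hSdef
  have hSm : MeasurableSet S := measurableSet_le measurable_const continuous_norm.measurable
  have hFtail : (∫⁻ v in S, ENNReal.ofReal (F v)) ≤ ENNReal.ofReal (lam ^ 2) := by
    rw [← ofReal_integral_eq_lintegral_ofReal hFi.integrableOn
      (Filter.Eventually.of_forall hFnonneg)]
    exact ENNReal.ofReal_le_ofReal hCtail.le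
  have hFball : (∫⁻ v in Sᶜ, ENNReal.ofReal (F v)) ≤ 1 := by
    rw [← hFlint]
    exact setLIntegral_le_lintegral _ _
  set N : EuclideanSpace ℝ (Fin d) → ℝ≥0∞ :=
    fun x => ∫⁻ v, ENNReal.ofReal ((χ x v - φ x) ^ 2 * F v) with hNdef
  have hNm : Measurable N := Measurable.lintegral_prod_right' (m1.ennreal_ofReal)
  set A : ℝ≥0∞ := ∫⁻ x, N x with hAdef
  have hswap : A = ∫⁻ v, ∫⁻ x, ENNReal.ofReal ((χ x v - φ x) ^ 2 * F v) :=
    lintegral_lintegral_swap (m1.ennreal_ofReal).aemeasurable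
  have hinner : ∀ v : EuclideanSpace ℝ (Fin d),
      (∫⁻ x, ENNReal.ofReal ((χ x v - φ x) ^ 2 * F v))
        = (∫⁻ x, ENNReal.ofReal ((χ x v - φ x) ^ 2)) * ENNReal.ofReal (F v) := by
    intro v
    rw [← lintegral_mul_const' _ _ ENNReal.ofReal_ne_top]
    exact lintegral_congr fun x => ENNReal.ofReal_mul (sq_nonneg _)
  set B : ℝ := 2 * ε ^ 2 * Cl ^ 2 * K + 4 * P * lam ^ 2 with hBdef
  have hB0 : 0 ≤ B :=
    add_nonneg (mul_nonneg (by positivity) hK0)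
      (mul_nonneg (mul_nonneg (by norm_num) hP0) (sq_nonneg lam))
  have hAB : A ≤ ENNReal.ofReal B := by
    rw [hswap]
    calc (∫⁻ v, ∫⁻ x, ENNReal.ofReal ((χ x v - φ x) ^ 2 * F v))
        = ∫⁻ v, (∫⁻ x, ENNReal.ofReal ((χ x v - φ x) ^ 2)) * ENNReal.ofReal (F v) :=
          lintegral_congr hinner
      _ = (∫⁻ v in S, (∫⁻ x, ENNReal.ofReal ((χ x v - φ x) ^ 2)) * ENNReal.ofReal (F v))
          + ∫⁻ v in Sᶜ, (∫⁻ x, ENNReal.ofReal ((χ x v - φ x) ^ 2)) * ENNReal.ofReal (F v) :=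
          (lintegral_add_compl _ hSm).symm
      _ ≤ ENNReal.ofReal (4 * P) * ENNReal.ofReal (lam ^ 2)
          + ENNReal.ofReal (2 * ε ^ 2 * Cl ^ 2 * K) * 1 := by
          refine add_le_add ?_ ?_
          · calc (∫⁻ v in S, (∫⁻ x, ENNReal.ofReal ((χ x v - φ x) ^ 2)) * ENNReal.ofReal (F v))
                ≤ ∫⁻ v in S, ENNReal.ofReal (4 * P) * ENNReal.ofReal (F v) :=
                  lintegral_mono fun v => mul_le_mul_left (hJA v) _
              _ = ENNReal.ofReal (4 * P) * ∫⁻ v in S, ENNReal.ofReal (F v) :=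
                  lintegral_const_mul' _ _ ENNReal.ofReal_ne_top
              _ ≤ ENNReal.ofReal (4 * P) * ENNReal.ofReal (lam ^ 2) :=
                  mul_le_mul_right hFtail _
          · calc (∫⁻ v in Sᶜ, (∫⁻ x, ENNReal.ofReal ((χ x v - φ x) ^ 2)) * ENNReal.ofReal (F v))
                ≤ ∫⁻ v in Sᶜ, ENNReal.ofReal (2 * ε ^ 2 * Cl ^ 2 * K) * ENNReal.ofReal (F v) := by
                  refine setLIntegral_mono (measurable_const.mul hFmeas.ennreal_ofReal) ?_
                  intro v hv
                  have hvlt : ‖v‖ ≤ Cl := by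
                    have : ¬ Cl ≤ ‖v‖ := hv
                    linarith [lt_of_not_ge this]
                  refine mul_le_mul_left ((hJB v).trans (ENNReal.ofReal_le_ofReal ?_)) _
                  have hsq : ‖v‖ ^ 2 ≤ Cl ^ 2 := pow_le_pow_left₀ (norm_nonneg v) hvlt 2
                  nlinarith [sq_nonneg ε, hK0, mul_nonneg (sq_nonneg ε) hK0]
              _ = ENNReal.ofReal (2 * ε ^ 2 * Cl ^ 2 * K) * ∫⁻ v in Sᶜ, ENNReal.ofReal (F v) :=
                  lintegral_const_mul' _ _ ENNReal.ofReal_ne_top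
              _ ≤ ENNReal.ofReal (2 * ε ^ 2 * Cl ^ 2 * K) * 1 :=
                  mul_le_mul_right hFball _
      _ ≤ ENNReal.ofReal B := by
          rw [mul_one, ← ENNReal.ofReal_mul (by positivity : (0:ℝ) ≤ 4 * P),
            ← ENNReal.ofReal_add (by positivity) (mul_nonneg (by positivity) hK0)]
          refine ENNReal.ofReal_le_ofReal ?_
          rw [hBdef]
          nlinarith [hP0, hK0]
  have hAne : A ≠ ⊤ := (hAB.trans_lt ENNReal.ofReal_lt_top).ne
  have hG : ∀ x : EuclideanSpace ℝ (Fin d),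
      (∫ v, (χ x v - φ x) ^ 2 * F v) = (N x).toReal := by
    intro x
    exact integral_eq_lintegral_of_nonneg_ae
      (Filter.Eventually.of_forall fun v => mul_nonneg (sq_nonneg _) (hFnonneg v))
      ((((hχmeas.comp measurable_prodMk_left).sub measurable_const).pow_const 2).mul
        hFmeas).aestronglyMeasurable
  have houter : (∫ x, ∫ v, (χ x v - φ x) ^ 2 * F v) = A.toReal := by
    calc (∫ x, ∫ v, (χ x v - φ x) ^ 2 * F v) = ∫ x, (N x).toReal :=
          integral_congr_ae (Filter.Eventually.of_forall hG)
      _ = (∫⁻ x, ENNReal.ofReal ((N x).toReal)).toReal :=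
          integral_eq_lintegral_of_nonneg_ae
            (Filter.Eventually.of_forall fun x => ENNReal.toReal_nonneg)
            (hNm.ennreal_toReal.aestronglyMeasurable)
      _ = A.toReal := by
          congr 1
          rw [hAdef]
          refine lintegral_congr_ae ?_
          filter_upwards [ae_lt_top hNm hAne] with x hx
          exact ENNReal.ofReal_toReal hx.ne
  rw [houter]
  calc A.toReal ≤ (ENNReal.ofReal B).toReal :=
        ENNReal.toReal_mono ENNReal.ofReal_ne_top hAB
    _ = B := ENNReal.toReal_ofReal hB0
    _ ≤ 2 * ε ^ 2 * Cl ^ 2 * (2 * K) + 4 * P * lam ^ 2 := by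
        rw [hBdef]
        nlinarith [mul_nonneg (mul_nonneg (mul_nonneg (by norm_num : (0:ℝ) ≤ 2)
          (sq_nonneg ε)) (sq_nonneg Cl)) hK0]
end
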